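/- Let p be a prime with p ≡ 3 (mod 4). Then the quaternion algebra (−1, −p)_ℚ is a division ring, i.e., every nonzero element of (−1, −p)_ℚ is invertible. -/

import Mathlib

open scoped Quaternion

/-! The reduced norm of `(a, b)_K` is the quadratic form `x₀² - a x₁² - b x₂² + a b x₃²`, which is
positive definite when `a, b < 0` (the algebra is ramified at the real place). So every nonzero `x`
has nonzero norm `x * star x`, and `(x * star x)⁻¹ • star x` inverts it. -/

namespace QuaternionAlgebra

theorem isUnit_of_isUnit_re_mul_star {R : Type*} [CommRing R] {c₁ c₂ c₃ : R}
    {x : ℍ[R,c₁,c₂,c₃]} (h : IsUnit (x * star x).re) : IsUnit x := by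
  obtain ⟨n, hn⟩ := h
  have hr : x * star x = (n : ℍ[R,c₁,c₂,c₃]) := by rw [mul_star_eq_coe, ← hn]
  have hl : star x * x = (n : ℍ[R,c₁,c₂,c₃]) := by rw [star_comm_self', hr]
  refine ⟨⟨x, (↑n⁻¹ : R) • star x, ?_, ?_⟩, rfl⟩
  · rw [mul_smul_comm, hr, smul_coe, Units.inv_mul, coe_one]
  · rw [smul_mul_assoc, hl, smul_coe, Units.inv_mul, coe_one]

theorem re_mul_star_eq {R : Type*} [CommRing R] {a b : R} (x : ℍ[R,a,b]) :
    (x * star x).re = x.re ^ 2 - a * x.imI ^ 2 - b * x.imJ ^ 2 + a * b * x.imK ^ 2 := by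
  simp only [re_mul, re_star, imI_star, imJ_star, imK_star, zero_mul, add_zero]
  ring

section Definite

variable {K : Type*} [Field K] [LinearOrder K] [IsStrictOrderedRing K] {a b : K}

theorem re_mul_star_eq_zero_iff (ha : a < 0) (hb : b < 0) {x : ℍ[K,a,b]} :
    (x * star x).re = 0 ↔ x = 0 := by
  refine ⟨fun h => ?_, fun h => by simp [h]⟩
  rw [re_mul_star_eq] at h
  have hsum : x.re ^ 2 + -a * x.imI ^ 2 + -b * x.imJ ^ 2 + a * b * x.imK ^ 2 = 0 := by
    linear_combination h
  have hi := mul_nonneg (neg_nonneg.2 ha.le) (sq_nonneg x.imI)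
  have hj := mul_nonneg (neg_nonneg.2 hb.le) (sq_nonneg x.imJ)
  have hk := mul_nonneg (mul_nonneg_of_nonpos_of_nonpos ha.le hb.le) (sq_nonneg x.imK)
  have hri := add_nonneg (sq_nonneg x.re) hi
  rw [add_eq_zero_iff_of_nonneg (add_nonneg hri hj) hk, add_eq_zero_iff_of_nonneg hri hj,
    add_eq_zero_iff_of_nonneg (sq_nonneg _) hi] at hsum
  obtain ⟨⟨⟨hre, hI⟩, hJ⟩, hK⟩ := hsum
  ext <;> simp_all [ha.ne, hb.ne]

theorem isUnit_of_ne_zero (ha : a < 0) (hb : b < 0) {x : ℍ[K,a,b]} (hx : x ≠ 0) : IsUnit x :=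
  isUnit_of_isUnit_re_mul_star <| isUnit_iff_ne_zero.2 <| (re_mul_star_eq_zero_iff ha hb).not.2 hx

end Definite

end QuaternionAlgebra

theorem quaternion_neg_one_neg_p_division_general (p : ℕ) (hp : p.Prime) :
    ∀ x : ℍ[ℚ, -1, -(p : ℚ)], x ≠ 0 → IsUnit x :=
  fun _ => QuaternionAlgebra.isUnit_of_ne_zero (by norm_num) (by simpa using hp.pos)

theorem quaternion_neg_one_neg_p_division (p : ℕ) (hp : p.Prime) (h4 : p % 4 = 3) :
    ∀ x : ℍ[ℚ, -1, -(p : ℚ)], x ≠ 0 → IsUnit x :=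
  quaternion_neg_one_neg_p_division_general p hp
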